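/- arXiv:2009.04164 — 3 statements merged into one kernel-verified Lean document; each statement's English description precedes it below -/
import Mathlib

section
/- If the groups ℤ^n and ℤ^m (each equipped with the word metric coming from the standard generating set, equivalently the ℓ^∞ or ℓ^1 metric) are quasi-isometric, then n = m. -/
/-!
Volume growth. The closed ball of radius `R` in `ℤ^a` has `(2R+1)^a` points. A map
`ℤ^a → ℤ^b` that is coarsely Lipschitz and whose fibres have bounded diameter sends this ball
into a ball of radius `O(R)` in `ℤ^b`, with `O(1)` points in each fibre, so
`(2R+1)^a = O(R^b)` and hence `a ≤ b`. A quasi-isometry and its coarse inverse both have these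
two properties.
-/
open Finset Metric

noncomputable def latticeBall {ι : Type*} [Fintype ι] [DecidableEq ι] (x : ι → ℤ) (R : ℕ) :
    Finset (ι → ℤ) :=
  Fintype.piFinset fun i => Icc (x i - R) (x i + R)

section
variable {ι : Type*} [Fintype ι] [DecidableEq ι]

theorem mem_latticeBall {x y : ι → ℤ} {R : ℕ} : y ∈ latticeBall x R ↔ dist y x ≤ R := by
  rw [← mem_coe, latticeBall, Fintype.coe_piFinset, ← mem_closedBall,
    closedBall_pi _ R.cast_nonneg]
  simp [Int.closedBall_eq_Icc]

theorem card_latticeBall (x : ι → ℤ) (R : ℕ) :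
    #(latticeBall x R) = (2 * R + 1) ^ Fintype.card ι := by
  have (i : ι) : #(Icc (x i - R) (x i + R)) = 2 * R + 1 := by rw [Int.card_Icc]; omega
  simp [latticeBall, this]

end

theorem Nat.le_of_pow_le_mul_pow {a b K : ℕ} (h : ∀ R, 1 ≤ R → R ^ a ≤ K * R ^ b) : a ≤ b := by
  by_contra! hba
  have hK := h (K + 1) le_add_self
  have : (K + 1) ^ (b + 1) ≤ (K + 1) ^ a := Nat.pow_le_pow_right K.succ_pos hba
  rw [pow_succ'] at this
  nlinarith [Nat.pow_pos (n := b) K.succ_pos]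

theorem Fintype.card_le_of_coarseEmbedding {ι κ : Type*} [Fintype ι] [DecidableEq ι]
    [Fintype κ] [DecidableEq κ] {φ : (ι → ℤ) → (κ → ℤ)} {L K D : ℝ}
    (hLip : ∀ x y, dist (φ x) (φ y) ≤ L * dist x y + K)
    (hfiber : ∀ x y, φ x = φ y → dist x y ≤ D) :
    Fintype.card ι ≤ Fintype.card κ := by
  obtain ⟨N, hLN, hKN, hDN⟩ : ∃ N : ℕ, L ≤ N ∧ K ≤ N ∧ D ≤ N := by
    obtain ⟨N, hN⟩ := exists_nat_ge (max L (max K D))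
    exact ⟨N, by grind⟩
  refine Nat.le_of_pow_le_mul_pow (K := (2 * N + 1) ^ card ι * (4 * N + 1) ^ card κ)
    fun R hR => ?_
  set S := latticeBall (0 : ι → ℤ) R
  have hmaps : S.image φ ⊆ latticeBall (φ 0) (N * R + N) := by
    refine image_subset_iff.2 fun x hx => mem_latticeBall.2 ?_
    have hx : dist x 0 ≤ R := mem_latticeBall.1 hx
    calc dist (φ x) (φ 0) ≤ L * dist x 0 + K := hLip x 0
      _ ≤ N * R + N := by gcongr
      _ = ((N * R + N : ℕ) : ℝ) := by push_cast; ring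
  have hfib : ∀ y ∈ S.image φ, #{x ∈ S | φ x = y} ≤ (2 * N + 1) ^ card ι := by
    intro y hy
    obtain ⟨x₀, -, rfl⟩ := mem_image.1 hy
    rw [← card_latticeBall x₀ N]
    exact card_le_card fun x hx =>
      mem_latticeBall.2 ((hfiber x x₀ (mem_filter.1 hx).2).trans hDN)
  calc R ^ card ι ≤ (2 * R + 1) ^ card ι := by gcongr; omega
    _ = #S := (card_latticeBall _ _).symm
    _ ≤ (2 * N + 1) ^ card ι * #(latticeBall (φ 0) (N * R + N)) :=
      (card_le_mul_card_image S _ hfib).trans (Nat.mul_le_mul_left _ (card_le_card hmaps))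
    _ ≤ (2 * N + 1) ^ card ι * ((4 * N + 1) * R) ^ card κ := by
      rw [card_latticeBall]; gcongr; nlinarith
    _ = _ := by rw [mul_pow]; ring

theorem dist_coarseRightInverse_le {X Y : Type*} [PseudoMetricSpace X]
    [PseudoMetricSpace Y] {f : X → Y} {g : Y → X} {l C : ℝ} (hl : 0 < l)
    (hlow : ∀ x y, dist x y / l - C ≤ dist (f x) (f y)) (hfg : ∀ y, dist (f (g y)) y ≤ C)
    (y y' : Y) : dist (g y) (g y') ≤ l * dist y y' + 3 * l * C := by
  have hfar : dist (f (g y)) (f (g y')) ≤ dist y y' + 2 * C := by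
    linarith [dist_triangle4 (f (g y)) y y' (f (g y')), hfg y, dist_comm (f (g y')) y' ▸ hfg y']
  have : dist (g y) (g y') / l ≤ dist y y' + 3 * C := by linarith [hlow (g y) (g y')]
  rw [div_le_iff₀ hl] at this
  linarith

theorem zn_qi_zm_rank_general (n m : ℕ) (f : (Fin n → ℤ) → (Fin m → ℤ)) (l C : ℝ)
    (hl : 1 ≤ l)
    (hlow : ∀ x y, dist x y / l - C ≤ dist (f x) (f y))
    (hup : ∀ x y, dist (f x) (f y) ≤ l * dist x y + C)
    (hdense : ∀ y, ∃ x, dist (f x) y ≤ C) :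
    n = m := by
  have hl₀ : 0 < l := one_pos.trans_le hl
  choose g hfg using hdense
  have hf_fiber (x x' : Fin n → ℤ) (h : f x = f x') : dist x x' ≤ l * C := by
    have := hlow x x'
    rw [h, dist_self, sub_nonpos, div_le_iff₀ hl₀] at this
    linarith
  have hg_fiber (y y' : Fin m → ℤ) (h : g y = g y') : dist y y' ≤ 2 * C := by
    calc dist y y' ≤ dist (f (g y)) y + dist (f (g y')) y' := by
          rw [h, dist_comm _ y]; exact dist_triangle y _ y'
      _ ≤ 2 * C := by linarith [hfg y, hfg y']
  have hnm := Fintype.card_le_of_coarseEmbedding hup hf_fiber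
  have hmn := Fintype.card_le_of_coarseEmbedding
    (dist_coarseRightInverse_le hl₀ hlow hfg) hg_fiber
  simp only [Fintype.card_fin] at hnm hmn
  exact hnm.antisymm hmn

/-- Quasi-isometry invariance of rank: if `ℤ^n` and `ℤ^m` (with the sup metric)
are quasi-isometric, then `n = m`. -/
theorem zn_qi_zm_rank (n m : ℕ) (f : (Fin n → ℤ) → (Fin m → ℤ)) (l C : ℝ)
    (hl : 1 ≤ l) (hC : 0 ≤ C)
    (hlow : ∀ x y, dist x y / l - C ≤ dist (f x) (f y))
    (hup : ∀ x y, dist (f x) (f y) ≤ l * dist x y + C)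
    (hdense : ∀ y, ∃ x, dist (f x) y ≤ C) :
    n = m :=
  zn_qi_zm_rank_general n m f l C hl hlow hup hdense
end

section
/- Let X be a metric space that is quasi-isometric to ℝ, and let g : ℝ → X be a quasi-isometric embedding. Then the image of g is coarsely dense in X: there is a constant D such that every point of X lies within distance D of g(ℝ). -/
/-!
A quasi-isometric embedding `f : ℝ → ℝ` (here `φ ∘ g`) has bounded oscillation on unit intervals,
so by connectedness of intervals it satisfies a coarse intermediate value theorem. If `f` were
bounded above, the lower bound would push `f T` and `f (-T)` far below `f 0`, and the coarse
intermediate value theorem would give `s' ≤ 0 ≤ s` with `f s` and `f s'` near a common value far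
below `f 0`; then `s` and `s'` are close, so `s` is close to `0`, while `f s` is far from `f 0`.
Hence `f` is unbounded in both directions and coarsely surjective, and this pulls back along `φ`
to coarse density of the image of `g`.
-/

open Metric

theorem IsPreconnected.exists_dist_le_of_le_of_le {α : Type*} [PseudoMetricSpace α] {s : Set α}
    (hs : IsPreconnected s) {f : α → ℝ} {δ K r : ℝ} (hδ : 0 < δ)
    (hf : ∀ u ∈ s, ∀ v ∈ s, dist u v < δ → dist (f u) (f v) ≤ K) {a b : α} (ha : a ∈ s)
    (hb : b ∈ s) (hfa : f a ≤ r) (hfb : r ≤ f b) : ∃ t ∈ s, dist (f t) r ≤ K := by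
  by_contra! hfar
  have hK : 0 ≤ K := by simpa using hf a ha a ha (by simpa using hδ)
  have hside : ∀ u ∈ s, ∀ v ∈ s, dist u v < δ → f u < r → f v < r := by
    intro u hu v hv huv hur
    have h1 := hfar u hu
    have h2 := hf u hu v hv huv
    rw [Real.dist_eq, abs_of_neg (by linarith)] at h1
    rw [Real.dist_eq, abs_sub_comm] at h2
    linarith [le_abs_self (f v - f u)]
  have : PreconnectedSpace s := isPreconnected_iff_preconnectedSpace.mp hs
  have hlc : IsLocallyConstant fun t : s => f t < r :=
    (IsLocallyConstant.iff_eventually_eq _).2 fun x => eventually_nhds_iff.2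
      ⟨δ, hδ, fun y hy => propext ⟨hside y y.2 x x.2 hy, hside x x.2 y y.2 (by rwa [dist_comm])⟩⟩
  have hfa' : f a < r :=
    hfa.lt_of_ne fun h => (hfar a ha).not_ge (by rw [h, dist_self]; exact hK)
  have := hlc.apply_eq_of_preconnectedSpace ⟨a, ha⟩ ⟨b, hb⟩
  simp only [hfa', eq_iff_iff, true_iff] at this
  linarith

structure IsQIEmbedding {α β : Type*} [PseudoMetricSpace α] [PseudoMetricSpace β]
    (f : α → β) (l C : ℝ) : Prop where
  dist_div_sub_le : ∀ x y, dist x y / l - C ≤ dist (f x) (f y)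
  dist_le_mul_add : ∀ x y, dist (f x) (f y) ≤ l * dist x y + C

namespace IsQIEmbedding

section General

variable {α β γ : Type*} [PseudoMetricSpace α] [PseudoMetricSpace β] [PseudoMetricSpace γ]
  {f : α → β} {l C : ℝ}

theorem const_nonneg (hf : IsQIEmbedding f l C) (x : α) : 0 ≤ C := by
  simpa using hf.dist_le_mul_add x x

theorem dist_le_mul_dist_apply_add (hf : IsQIEmbedding f l C) (hl : 0 < l) (x y : α) :
    dist x y ≤ l * (dist (f x) (f y) + C) := by
  rw [← div_le_iff₀' hl]
  linarith [hf.dist_div_sub_le x y]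

theorem dist_le_of_dist_apply_le (hf : IsQIEmbedding f l C) (hl : 0 < l) {x y : α} {K : ℝ}
    (h : dist (f x) (f y) ≤ K) : dist x y ≤ l * (K + C) :=
  (hf.dist_le_mul_dist_apply_add hl x y).trans (by gcongr)

theorem dist_apply_le_of_dist_le (hf : IsQIEmbedding f l C) (hl : 0 ≤ l) {x y : α} {δ : ℝ}
    (h : dist x y ≤ δ) : dist (f x) (f y) ≤ l * δ + C :=
  (hf.dist_le_mul_add x y).trans (by gcongr)

theorem dist_apply_le_add_of_dist_lt_one (hf : IsQIEmbedding f l C) (hl : 0 ≤ l) (x y : α)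
    (h : dist x y < 1) : dist (f x) (f y) ≤ l + C := by
  simpa using hf.dist_apply_le_of_dist_le hl h.le

theorem comp {g : β → γ} {l' C' : ℝ} (hg : IsQIEmbedding g l' C') (hf : IsQIEmbedding f l C)
    (hl' : 1 ≤ l') : IsQIEmbedding (g ∘ f) (l' * l) (l' * C + C') where
  dist_div_sub_le x y := by
    have hC : C / l' ≤ l' * C := by
      have := hf.const_nonneg x
      calc C / l' ≤ C := div_le_self this hl'
        _ ≤ l' * C := le_mul_of_one_le_left this hl'
    calc dist x y / (l' * l) - (l' * C + C')
        ≤ (dist x y / l - C) / l' - C' := by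
          rw [sub_div, div_div, mul_comm l]
          linarith
      _ ≤ dist (f x) (f y) / l' - C' := by gcongr; exact hf.dist_div_sub_le x y
      _ ≤ dist (g (f x)) (g (f y)) := hg.dist_div_sub_le _ _
  dist_le_mul_add x y := by
    have : 0 ≤ l' := by linarith
    calc dist (g (f x)) (g (f y)) ≤ l' * dist (f x) (f y) + C' := hg.dist_le_mul_add _ _
      _ ≤ l' * (l * dist x y + C) + C' := by gcongr; exact hf.dist_le_mul_add x y
      _ = l' * l * dist x y + (l' * C + C') := by ring

theorem neg {f : α → ℝ} (hf : IsQIEmbedding f l C) : IsQIEmbedding (-f) l C where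
  dist_div_sub_le x y := by simpa only [Pi.neg_apply, dist_neg_neg] using hf.dist_div_sub_le x y
  dist_le_mul_add x y := by simpa only [Pi.neg_apply, dist_neg_neg] using hf.dist_le_mul_add x y

end General

variable {f : ℝ → ℝ} {Λ c : ℝ}

theorem apply_le_sub_of_forall_apply_lt (hf : IsQIEmbedding f Λ c) (hΛ : 0 < Λ) {r w : ℝ}
    (hr : ∀ t, f t < r) (hw : r - f 0 < w) {t : ℝ} (ht : |t| = Λ * (w + c)) : f t ≤ f 0 - w := by
  have h := hf.dist_div_sub_le t 0
  rw [Real.dist_eq, Real.dist_eq, sub_zero, ht, mul_div_cancel_left₀ _ hΛ.ne',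
    add_sub_cancel_right] at h
  rcases le_abs'.1 h with h | h
  · linarith
  · linarith [hr t]

theorem dist_apply_zero_le_of_dist_apply_le (hf : IsQIEmbedding f Λ c) (hΛ : 0 < Λ)
    {s s' v K : ℝ} (hs : 0 ≤ s) (hs' : s' ≤ 0) (hfs : dist (f s) v ≤ K)
    (hfs' : dist (f s') v ≤ K) : dist (f s) (f 0) ≤ Λ * (Λ * (2 * K + c)) + c := by
  have hss' : dist s s' ≤ Λ * (2 * K + c) :=
    hf.dist_le_of_dist_apply_le hΛ (by linarith [dist_triangle_right (f s) (f s') v])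
  refine hf.dist_apply_le_of_dist_le hΛ.le ?_
  rw [Real.dist_eq] at hss' ⊢
  rw [sub_zero, abs_of_nonneg hs]
  linarith [le_abs_self (s - s')]

theorem exists_le_apply (hf : IsQIEmbedding f Λ c) (hΛ : 0 < Λ) (r : ℝ) : ∃ t, r ≤ f t := by
  by_contra! hr
  set K := Λ + c
  have hc := hf.const_nonneg 0
  set B := Λ * (Λ * (2 * K + c)) + c
  -- `w > r - f 0` sends `f (±T)` below `f 0 - w`; `w > K + B` contradicts `hnear`.
  set w := max (r - f 0) (K + B) + 1
  have hw : r - f 0 < w := by linarith [le_max_left (r - f 0) (K + B)]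
  have hwB : K + B < w := by linarith [le_max_right (r - f 0) (K + B)]
  have hw₀ : 0 < w := by
    have : 0 ≤ K + B := by positivity
    linarith
  set T := Λ * (w + c)
  have hT : 0 ≤ T := by positivity
  have hosc : ∀ u v : ℝ, dist u v < 1 → dist (f u) (f v) ≤ K :=
    hf.dist_apply_le_add_of_dist_lt_one hΛ.le
  obtain ⟨s, ⟨hs, -⟩, hfs⟩ := isPreconnected_Icc.exists_dist_le_of_le_of_le one_pos
    (fun u _ v _ => hosc u v) (Set.right_mem_Icc.2 hT) (Set.left_mem_Icc.2 hT)
    (hf.apply_le_sub_of_forall_apply_lt hΛ hr hw (abs_of_nonneg hT)) (by linarith)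
  obtain ⟨s', ⟨-, hs'⟩, hfs'⟩ := isPreconnected_Icc.exists_dist_le_of_le_of_le one_pos
    (fun u _ v _ => hosc u v) (Set.left_mem_Icc.2 (neg_nonpos.2 hT))
    (Set.right_mem_Icc.2 (neg_nonpos.2 hT))
    (hf.apply_le_sub_of_forall_apply_lt hΛ hr hw (by rw [abs_neg, abs_of_nonneg hT]))
    (by linarith)
  have hnear := hf.dist_apply_zero_le_of_dist_apply_le hΛ hs hs' hfs hfs'
  have hfar := dist_triangle_left (f 0) (f 0 - w) (f s)
  rw [Real.dist_eq, sub_sub_cancel, abs_of_pos hw₀] at hfar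
  linarith

theorem exists_dist_apply_le (hf : IsQIEmbedding f Λ c) (hΛ : 0 < Λ) (r : ℝ) :
    ∃ t, dist (f t) r ≤ Λ + c := by
  obtain ⟨t₁, ht₁⟩ := hf.exists_le_apply hΛ r
  obtain ⟨t₂, ht₂⟩ := hf.neg.exists_le_apply hΛ (-r)
  obtain ⟨t, -, ht⟩ := isPreconnected_univ.exists_dist_le_of_le_of_le one_pos
    (fun u _ v _ => hf.dist_apply_le_add_of_dist_lt_one hΛ.le u v) (Set.mem_univ t₂)
    (Set.mem_univ t₁) (by simpa using ht₂ : f t₂ ≤ r) ht₁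
  exact ⟨t, ht⟩

end IsQIEmbedding

theorem qi_line_in_quasiline_coarsely_dense_general (X : Type*) [MetricSpace X]
    (φ : X → ℝ) (l C : ℝ) (hl : 1 ≤ l)
    (hφlow : ∀ x y : X, dist x y / l - C ≤ dist (φ x) (φ y))
    (hφup : ∀ x y : X, dist (φ x) (φ y) ≤ l * dist x y + C)
    (g : ℝ → X) (l' C' : ℝ) (hl' : 1 ≤ l')
    (hglow : ∀ s t : ℝ, dist s t / l' - C' ≤ dist (g s) (g t))
    (hgup : ∀ s t : ℝ, dist (g s) (g t) ≤ l' * dist s t + C') :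
    ∃ D : ℝ, ∀ p : X, ∃ t : ℝ, dist (g t) p ≤ D := by
  have hφ : IsQIEmbedding φ l C := ⟨hφlow, hφup⟩
  have hg : IsQIEmbedding g l' C' := ⟨hglow, hgup⟩
  have hl₀ : 0 < l := by linarith
  have hΛ : 0 < l * l' := by positivity
  refine ⟨l * (l * l' + (l * C' + C) + C), fun p => ?_⟩
  obtain ⟨t, ht⟩ := (hφ.comp hg hl).exists_dist_apply_le hΛ (φ p)
  exact ⟨t, hφ.dist_le_of_dist_apply_le hl₀ ht⟩

/-- If `X` is a metric space quasi-isometric to `ℝ` (via a quasi-isometry `φ : X → ℝ`)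
and `g : ℝ → X` is a quasi-isometric embedding, then the image of `g` is coarsely
dense in `X`. -/
theorem qi_line_in_quasiline_coarsely_dense (X : Type*) [MetricSpace X]
    (φ : X → ℝ) (l C : ℝ) (hl : 1 ≤ l) (hC : 0 ≤ C)
    (hφlow : ∀ x y : X, dist x y / l - C ≤ dist (φ x) (φ y))
    (hφup : ∀ x y : X, dist (φ x) (φ y) ≤ l * dist x y + C)
    (hφdense : ∀ r : ℝ, ∃ x : X, dist (φ x) r ≤ C)
    (g : ℝ → X) (l' C' : ℝ) (hl' : 1 ≤ l') (hC' : 0 ≤ C')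
    (hglow : ∀ s t : ℝ, dist s t / l' - C' ≤ dist (g s) (g t))
    (hgup : ∀ s t : ℝ, dist (g s) (g t) ≤ l' * dist s t + C') :
    ∃ D : ℝ, ∀ p : X, ∃ t : ℝ, dist (g t) p ≤ D :=
  qi_line_in_quasiline_coarsely_dense_general X φ l C hl hφlow hφup g l' C' hl' hglow hgup
end

section
/- Let X and Y be metric spaces with X unbounded, and equip X × Y with the metric d((x,y),(x',y')) = max(d_X(x,x'), d_Y(y,y')). If X × Y is quasi-isometric to ℝ, then Y is bounded. -/
/-!
Since `f` is coarsely surjective and coarsely injective, any two points of `X × Y` are joined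
by a chain of steps of bounded size `s`. Fix a base point `o`; choose `ρ` larger than half the
jump of `f` along a step, and `T` so large that every point at distance `≥ T` from `o` is mapped
at least `ρ` away from `f o`. A chain of such far points can then never cross from one side of
`f o` to the other. When both factors are unbounded, every far point is joined to a fixed far
point `(x, y)` by a chain of far points, moving first inside the slice through its far
coordinate and then inside a slice through `x` or `y`. So all far points map to the same side
of `f o`, while coarse density provides far points on both sides.
-/

open Relation

def CoarselyConnected (s : ℝ) (Z : Type*) [PseudoMetricSpace Z] : Prop :=
  ∀ a b : Z, ReflTransGen (fun p q : Z => dist p q ≤ s) a b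

theorem CoarselyConnected.of_dense_of_dist_le {Z : Type*} [PseudoMetricSpace Z] {s C : ℝ}
    (f : Z → ℝ) (hdense : ∀ r : ℝ, ∃ p, dist (f p) r ≤ C)
    (hs : ∀ a b, dist (f a) (f b) ≤ 2 * C + 1 → dist a b ≤ s) : CoarselyConnected s Z := by
  intro a b
  have hC : 0 ≤ C := let ⟨_, hp⟩ := hdense 0; dist_nonneg.trans hp
  have reach : ∀ n : ℕ, ∀ t : ℝ, dist (f a) t ≤ n →
      ∃ c, ReflTransGen (fun p q : Z => dist p q ≤ s) a c ∧ dist (f c) t ≤ C := by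
    intro n
    induction n with
    | zero =>
      intro t ht
      obtain rfl := dist_le_zero.1 (by exact_mod_cast ht : dist (f a) t ≤ 0)
      exact ⟨a, .refl, by rwa [dist_self]⟩
    | succ n ih =>
      intro t ht
      have hn : (0 : ℝ) < n + 1 := by positivity
      set t' := AffineMap.lineMap (f a) t ((n : ℝ) / (n + 1))
      obtain ⟨c', hac', hc'⟩ := ih t' <| by
        rw [dist_comm, dist_lineMap_left, Real.norm_of_nonneg (by positivity)]
        calc (n : ℝ) / (n + 1) * dist (f a) t ≤ n / (n + 1) * (n + 1) := by
              gcongr; exact_mod_cast ht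
          _ = n := by field_simp
      obtain ⟨c, hc⟩ := hdense t
      have ht' : dist t' t ≤ 1 := by
        rw [dist_lineMap_right, show 1 - (n : ℝ) / (n + 1) = 1 / (n + 1) by field_simp; ring,
          Real.norm_of_nonneg (by positivity), one_div, inv_mul_le_iff₀ hn]
        simpa using ht
      refine ⟨c, hac'.tail (hs _ _ ?_), hc⟩
      calc dist (f c') (f c) ≤ dist (f c') t' + dist t' t + dist t (f c) := dist_triangle4 _ _ _ _
        _ ≤ C + 1 + C := by rw [dist_comm t]; gcongr
        _ = 2 * C + 1 := by ring
  obtain ⟨n, hn⟩ := exists_nat_ge (dist (f a) (f b))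
  obtain ⟨c, hac, hc⟩ := reach n (f b) hn
  exact hac.tail (hs _ _ (by linarith))

theorem Relation.ReflTransGen.add_le_of_dist_lt {α : Type*} {r : α → α → Prop} {φ : α → ℝ}
    {t ρ : ℝ} (hjump : ∀ a b, r a b → dist (φ a) (φ b) < 2 * ρ) (hgap : ∀ a, ρ ≤ dist (φ a) t)
    {a b : α} (hab : ReflTransGen r a b) (ha : t + ρ ≤ φ a) : t + ρ ≤ φ b := by
  induction hab with
  | refl => exact ha
  | @tail b c _ hbc ih =>
    have hjump := hjump b c hbc
    have hgap := hgap c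
    rw [Real.dist_eq, abs_lt] at hjump
    rw [Real.dist_eq, le_abs] at hgap
    rcases hgap with h | h <;> linarith

section Product

variable {X Y : Type*} [PseudoMetricSpace X] [PseudoMetricSpace Y] {φ : X × Y → ℝ}
  {s t ρ T : ℝ} {x₀ : X} {y₀ : Y}

theorem add_le_apply_iff_of_le_dist_snd (hconn : CoarselyConnected s (X × Y))
    (hjump : ∀ p q, dist p q ≤ s → dist (φ p) (φ q) < 2 * ρ)
    (hgap : ∀ p, T ≤ dist p (x₀, y₀) → ρ ≤ dist (φ p) t)
    {y : Y} (hy : T ≤ dist y y₀) (x x' : X) : t + ρ ≤ φ (x, y) ↔ t + ρ ≤ φ (x', y) := by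
  have hchain : ∀ a b : X, ReflTransGen (fun p q : X => dist p q ≤ s) a b := fun a b =>
    ReflTransGen.lift Prod.fst (fun p q h => (LipschitzWith.prod_fst.dist_le_mul p q).trans
      (by simpa using h)) _ _ (hconn (a, y) (b, y))
  have hjump' : ∀ a b : X, dist a b ≤ s → dist (φ (a, y)) (φ (b, y)) < 2 * ρ := fun a b h =>
    hjump _ _ (by rwa [dist_prod_same_right])
  have hgap' : ∀ a : X, ρ ≤ dist (φ (a, y)) t := fun a =>
    hgap _ (hy.trans (by rw [Prod.dist_eq]; exact le_max_right _ _))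
  exact ⟨(hchain x x').add_le_of_dist_lt hjump' hgap',
    (hchain x' x).add_le_of_dist_lt hjump' hgap'⟩

theorem add_le_apply_iff_of_le_dist_fst (hconn : CoarselyConnected s (X × Y))
    (hjump : ∀ p q, dist p q ≤ s → dist (φ p) (φ q) < 2 * ρ)
    (hgap : ∀ p, T ≤ dist p (x₀, y₀) → ρ ≤ dist (φ p) t)
    {x : X} (hx : T ≤ dist x x₀) (y y' : Y) : t + ρ ≤ φ (x, y) ↔ t + ρ ≤ φ (x, y') := by
  have hchain : ∀ a b : Y, ReflTransGen (fun p q : Y => dist p q ≤ s) a b := fun a b =>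
    ReflTransGen.lift Prod.snd (fun p q h => (LipschitzWith.prod_snd.dist_le_mul p q).trans
      (by simpa using h)) _ _ (hconn (x, a) (x, b))
  have hjump' : ∀ a b : Y, dist a b ≤ s → dist (φ (x, a)) (φ (x, b)) < 2 * ρ := fun a b h =>
    hjump _ _ (by rwa [dist_prod_same_left])
  have hgap' : ∀ a : Y, ρ ≤ dist (φ (x, a)) t := fun a =>
    hgap _ (hx.trans (by rw [Prod.dist_eq]; exact le_max_left _ _))
  exact ⟨(hchain y y').add_le_of_dist_lt hjump' hgap',
    (hchain y' y).add_le_of_dist_lt hjump' hgap'⟩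

theorem add_le_apply_iff_of_le_dist (hconn : CoarselyConnected s (X × Y))
    (hjump : ∀ p q, dist p q ≤ s → dist (φ p) (φ q) < 2 * ρ)
    (hgap : ∀ p, T ≤ dist p (x₀, y₀) → ρ ≤ dist (φ p) t)
    {x : X} {y : Y} (hx : T ≤ dist x x₀) (hy : T ≤ dist y y₀) {p : X × Y}
    (hp : T ≤ dist p (x₀, y₀)) : t + ρ ≤ φ p ↔ t + ρ ≤ φ (x, y) := by
  obtain ⟨x', y'⟩ := p
  rw [Prod.dist_eq, le_max_iff] at hp
  rcases hp with hx' | hy'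
  · exact (add_le_apply_iff_of_le_dist_fst hconn hjump hgap hx' y' y).trans
      (add_le_apply_iff_of_le_dist_snd hconn hjump hgap hy x' x)
  · exact (add_le_apply_iff_of_le_dist_snd hconn hjump hgap hy' x' x).trans
      (add_le_apply_iff_of_le_dist_fst hconn hjump hgap hx y' y)

end Product

/-- If `X` is unbounded and `X × Y` (with the max metric) is quasi-isometric
to `ℝ`, then `Y` is bounded. -/
theorem product_quasiline_second_factor_bounded (X Y : Type*)
    [MetricSpace X] [MetricSpace Y]
    (hX : ¬ Bornology.IsBounded (Set.univ : Set X))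
    (f : X × Y → ℝ) (l C : ℝ) (hl : 1 ≤ l) (hC : 0 ≤ C)
    (hlow : ∀ p q : X × Y, dist p q / l - C ≤ dist (f p) (f q))
    (hup : ∀ p q : X × Y, dist (f p) (f q) ≤ l * dist p q + C)
    (hdense : ∀ r : ℝ, ∃ p : X × Y, dist (f p) r ≤ C) :
    Bornology.IsBounded (Set.univ : Set Y) := by
  by_contra hY
  have hl₀ : 0 < l := by linarith
  set s := l * (3 * C + 1)
  set ρ := l * s + C
  set T := l * (ρ + C)
  have hρ : 0 < ρ := by positivity
  have hT : 0 ≤ l * T := by positivity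
  obtain ⟨x₀, x, hx⟩ : ∃ x₀ x : X, T ≤ dist x x₀ := by
    by_contra! h
    exact hX (Metric.isBounded_iff.2 ⟨T, fun a _ b _ => (h b a).le⟩)
  obtain ⟨y₀, y, hy⟩ : ∃ y₀ y : Y, T ≤ dist y y₀ := by
    by_contra! h
    exact hY (Metric.isBounded_iff.2 ⟨T, fun a _ b _ => (h b a).le⟩)
  set t := f (x₀, y₀)
  have hconn : CoarselyConnected s (X × Y) := .of_dense_of_dist_le f hdense fun a b h => by
    have : dist a b / l ≤ 3 * C + 1 := by linarith [hlow a b]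
    rwa [div_le_iff₀' hl₀] at this
  have hjump : ∀ p q, dist p q ≤ s → dist (f p) (f q) < 2 * ρ := fun p q h =>
    (hup p q).trans_lt (by nlinarith)
  have hgap : ∀ p, T ≤ dist p (x₀, y₀) → ρ ≤ dist (f p) t := fun p hp => by
    have : ρ + C ≤ dist p (x₀, y₀) / l := by rwa [le_div_iff₀' hl₀]
    linarith [hlow p (x₀, y₀)]
  have hfar : ∀ p, l * T + C < dist (f p) t → T ≤ dist p (x₀, y₀) := fun p hp => by
    by_contra! h
    nlinarith [hup p (x₀, y₀)]
  obtain ⟨p, hp⟩ := hdense (t + (l * T + 2 * C + ρ))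
  obtain ⟨q, hq⟩ := hdense (t - (l * T + 2 * C + ρ))
  rw [Real.dist_eq, abs_le] at hp hq
  have hp_far := hfar p (by linarith [le_abs_self (f p - t), Real.dist_eq (f p) t])
  have hq_far := hfar q (by linarith [neg_abs_le (f q - t), Real.dist_eq (f q) t])
  have hxy_above : t + ρ ≤ f (x, y) :=
    (add_le_apply_iff_of_le_dist hconn hjump hgap hx hy hp_far).1 (by linarith)
  have hq_above : t + ρ ≤ f q :=
    (add_le_apply_iff_of_le_dist hconn hjump hgap hx hy hq_far).2 hxy_above
  linarith
end
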